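/- arXiv:1006.3203 — 2 statements merged into one kernel-verified Lean document; each statement's English description precedes it below -/
import Mathlib

section
/- Let T : X → X be an invertible measure-preserving transformation of a probability space and b : X → (0,∞) measurable. If the function x ↦ log b(T(x)) − log b(x) is bounded below (or more generally if its negative part is integrable) and μ is T-invariant and b is measurable, then lim_{n→±∞} (1/n) log b(T^n x) = 0 for μ-almost every x, i.e. b is tempered on a full measure set. -/
/-!
Write `f = log b` and `φ = f ∘ T - f ≥ -c`. Truncating `f` to `[-K, K]` gives bounded coboundaries
with integral zero over every `T`-invariant set, and Fatou's lemma and dominated convergence carry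
this over to `φ`: it is integrable, with integral zero on every invariant set. For `α > 0` the
Birkhoff sums of `φ - α` are unbounded above on an invariant set, and Hopf's maximal ergodic lemma
on that set gives `-α μ(set) ≥ 0`, so it is null. Applied to `±φ` this shows that
`(f (T^[n] x) - f x) / n`, the Birkhoff average of `φ`, tends to `0` almost everywhere. The
backward statement is the forward one for `T⁻¹` and `-f`.
-/

open MeasureTheory Real Filter Set Function Topology

theorem MeasureTheory.MeasurePreserving.integral_comp_of_aestronglyMeasurable {X Y E : Type*}
    [MeasurableSpace X] {μ : Measure X} [MeasurableSpace Y] [NormedAddCommGroup E]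
    [NormedSpace ℝ E] {ν : Measure Y} {S : X → Y}
    (hS : MeasurePreserving S μ ν) {g : Y → E} (hg : AEStronglyMeasurable g ν) :
    ∫ x, g (S x) ∂μ = ∫ y, g y ∂ν := by
  rw [← integral_map hS.measurable.aemeasurable (hS.map_eq ▸ hg), hS.map_eq]

theorem measurable_birkhoffSum {X : Type*} [MeasurableSpace X] {T : X → X} (hT : Measurable T)
    {ψ : X → ℝ} (hψ : Measurable ψ) (n : ℕ) :
    Measurable (birkhoffSum T ψ n) :=
  Finset.measurable_sum _ fun k _ => hψ.comp (hT.iterate k)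

section MaximalErgodic

variable {X : Type*} {T : X → X} {ψ : X → ℝ}

/-- The running maximum `max_{n ≤ N} birkhoffSum T ψ n`, in the recursive form that makes it
measurable and integrable by induction. -/
noncomputable def maxBirkhoffSum (T : X → X) (ψ : X → ℝ) : ℕ → X → ℝ
  | 0 => 0
  | N + 1 => fun x => max (ψ x + maxBirkhoffSum T ψ N (T x)) 0

theorem maxBirkhoffSum_nonneg (N : ℕ) (x : X) : 0 ≤ maxBirkhoffSum T ψ N x := by
  cases N with
  | zero => exact le_rfl
  | succ N => exact le_max_right _ _

theorem birkhoffSum_le_maxBirkhoffSum {n N : ℕ} (h : n ≤ N) (x : X) :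
    birkhoffSum T ψ n x ≤ maxBirkhoffSum T ψ N x := by
  induction N generalizing n x with
  | zero =>
    obtain rfl : n = 0 := by omega
    exact (birkhoffSum_zero T ψ x).le
  | succ N ih =>
    cases n with
    | zero => exact (birkhoffSum_zero T ψ x).trans_le (maxBirkhoffSum_nonneg _ _)
    | succ n =>
      rw [birkhoffSum_succ']
      exact le_max_of_le_left (add_le_add_right (ih (by omega) (T x)) _)

theorem exists_maxBirkhoffSum_eq_birkhoffSum (N : ℕ) (x : X) :
    ∃ n ≤ N, maxBirkhoffSum T ψ N x = birkhoffSum T ψ n x := by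
  induction N generalizing x with
  | zero => exact ⟨0, le_rfl, (birkhoffSum_zero T ψ x).symm⟩
  | succ N ih =>
    obtain ⟨n, hn, heq⟩ := ih (T x)
    rcases le_total (ψ x + maxBirkhoffSum T ψ N (T x)) 0 with h | h
    · exact ⟨0, by omega, (max_eq_right h).trans (birkhoffSum_zero T ψ x).symm⟩
    · exact ⟨n + 1, by omega, (max_eq_left h).trans (by rw [birkhoffSum_succ', heq])⟩

theorem monotone_maxBirkhoffSum (x : X) : Monotone fun N => maxBirkhoffSum T ψ N x := by
  intro N M h
  obtain ⟨n, hn, heq⟩ := exists_maxBirkhoffSum_eq_birkhoffSum (T := T) (ψ := ψ) N x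
  exact heq.trans_le (birkhoffSum_le_maxBirkhoffSum (hn.trans h) x)

theorem maxBirkhoffSum_le_add_comp {N : ℕ} {x : X} (h : 0 < maxBirkhoffSum T ψ N x) :
    maxBirkhoffSum T ψ N x ≤ ψ x + maxBirkhoffSum T ψ N (T x) := by
  cases N with
  | zero => exact absurd h (lt_irrefl 0)
  | succ N =>
    have hpos : 0 < ψ x + maxBirkhoffSum T ψ N (T x) := by
      simpa [maxBirkhoffSum] using h
    calc maxBirkhoffSum T ψ (N + 1) x = ψ x + maxBirkhoffSum T ψ N (T x) := max_eq_left hpos.le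
      _ ≤ ψ x + maxBirkhoffSum T ψ (N + 1) (T x) := by
        gcongr
        exact monotone_maxBirkhoffSum _ N.le_succ

theorem iUnion_setOf_maxBirkhoffSum_pos :
    ⋃ N, {x | 0 < maxBirkhoffSum T ψ N x} = {x | ∃ n, 0 < birkhoffSum T ψ n x} := by
  ext x
  simp only [mem_iUnion, mem_ofPred_eq]
  constructor
  · rintro ⟨N, hN⟩
    obtain ⟨n, -, heq⟩ := exists_maxBirkhoffSum_eq_birkhoffSum N x
    exact ⟨n, heq ▸ hN⟩
  · rintro ⟨n, hn⟩
    exact ⟨n, hn.trans_le (birkhoffSum_le_maxBirkhoffSum le_rfl x)⟩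

variable [MeasurableSpace X] {μ : Measure X}

theorem measurable_maxBirkhoffSum (hT : Measurable T) (hψ : Measurable ψ) (N : ℕ) :
    Measurable (maxBirkhoffSum T ψ N) := by
  induction N with
  | zero => exact measurable_const
  | succ N ih => exact (hψ.add (ih.comp hT)).max measurable_const

theorem integrable_maxBirkhoffSum (hT : MeasurePreserving T μ μ) (hψ : Integrable ψ μ) (N : ℕ) :
    Integrable (maxBirkhoffSum T ψ N) μ := by
  induction N with
  | zero => exact integrable_zero _ _ _
  | succ N ih => exact (hψ.add (hT.integrable_comp_of_integrable ih)).pos_part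

/-- Garsia's proof: on `{M > 0}` we have `M ≤ ψ + M ∘ T`, while `M ≥ 0` vanishes off that set and
`M ∘ T` has the same integral as `M`. -/
theorem setIntegral_maxBirkhoffSum_pos_nonneg (hT : MeasurePreserving T μ μ)
    (hψm : Measurable ψ) (hψ : Integrable ψ μ) (N : ℕ) :
    0 ≤ ∫ x in {x | 0 < maxBirkhoffSum T ψ N x}, ψ x ∂μ := by
  set M := maxBirkhoffSum T ψ N
  have hMm : Measurable M := measurable_maxBirkhoffSum hT.measurable hψm N
  have hM : Integrable M μ := integrable_maxBirkhoffSum hT hψ N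
  have hMT : Integrable (fun x => M (T x)) μ := hT.integrable_comp_of_integrable hM
  have hE : MeasurableSet {x | 0 < M x} := measurableSet_lt measurable_const hMm
  have hME : ∫ x in {x | 0 < M x}, M x ∂μ = ∫ x, M x ∂μ :=
    setIntegral_eq_integral_of_forall_compl_eq_zero fun x hx =>
      le_antisymm (not_lt.1 hx) (maxBirkhoffSum_nonneg N x)
  calc 0 = ∫ x, M x ∂μ - ∫ x, M (T x) ∂μ := by
        rw [hT.integral_comp_of_aestronglyMeasurable hMm.aestronglyMeasurable, sub_self]
    _ ≤ ∫ x in {x | 0 < M x}, M x ∂μ - ∫ x in {x | 0 < M x}, M (T x) ∂μ := by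
        rw [hME]
        exact sub_le_sub_left (setIntegral_le_integral hMT
          (ae_of_all _ fun x => maxBirkhoffSum_nonneg N (T x))) _
    _ = ∫ x in {x | 0 < M x}, (M x - M (T x)) ∂μ :=
        (integral_sub hM.integrableOn hMT.integrableOn).symm
    _ ≤ ∫ x in {x | 0 < M x}, ψ x ∂μ :=
        setIntegral_mono_on (hM.sub hMT).integrableOn hψ.integrableOn hE fun x hx => by
          linarith [maxBirkhoffSum_le_add_comp (T := T) (ψ := ψ) hx]

/-- Hopf's maximal ergodic lemma. -/
theorem setIntegral_exists_birkhoffSum_pos_nonneg (hT : MeasurePreserving T μ μ)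
    (hψm : Measurable ψ) (hψ : Integrable ψ μ) :
    0 ≤ ∫ x in {x | ∃ n, 0 < birkhoffSum T ψ n x}, ψ x ∂μ := by
  have hlim := tendsto_setIntegral_of_monotone (s := fun N => {x | 0 < maxBirkhoffSum T ψ N x})
    (fun N => measurableSet_lt measurable_const (measurable_maxBirkhoffSum hT.measurable hψm N))
    (fun N M h x hx => hx.trans_le (monotone_maxBirkhoffSum x h)) hψ.integrableOn
  rw [iUnion_setOf_maxBirkhoffSum_pos] at hlim
  exact ge_of_tendsto' hlim fun N => setIntegral_maxBirkhoffSum_pos_nonneg hT hψm hψ N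

end MaximalErgodic

section Unbounded

variable {X : Type*} {T : X → X} {ψ : X → ℝ}

theorem bddAbove_range_birkhoffSum_comp_iff (x : X) :
    BddAbove (range fun n => birkhoffSum T ψ n (T x)) ↔
      BddAbove (range fun n => birkhoffSum T ψ n x) := by
  simp only [bddAbove_def, forall_mem_range]
  constructor
  · rintro ⟨C, hC⟩
    refine ⟨max 0 (ψ x + C), fun n => ?_⟩
    cases n with
    | zero => exact (birkhoffSum_zero T ψ x).trans_le (le_max_left _ _)
    | succ n =>
      exact (birkhoffSum_succ' T ψ n x).trans_le (le_max_of_le_right (by linarith [hC n]))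
  · rintro ⟨C, hC⟩
    exact ⟨C - ψ x, fun n => by linarith [hC (n + 1), birkhoffSum_succ' T ψ n x]⟩

theorem preimage_setOf_not_bddAbove_birkhoffSum :
    T ⁻¹' {x | ¬BddAbove (range fun n => birkhoffSum T ψ n x)} =
      {x | ¬BddAbove (range fun n => birkhoffSum T ψ n x)} :=
  ext fun x => not_congr (bddAbove_range_birkhoffSum_comp_iff x)

variable [MeasurableSpace X] {μ : Measure X}

theorem measurableSet_setOf_not_bddAbove_birkhoffSum (hT : Measurable T) (hψ : Measurable ψ) :
    MeasurableSet {x | ¬BddAbove (range fun n => birkhoffSum T ψ n x)} :=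
  (measurableSet_bddAbove_range (measurable_birkhoffSum hT hψ)).compl

/-- Hopf's lemma for the restriction of `μ` to this invariant set, on which the Birkhoff sums are
positive at some time. -/
theorem setIntegral_setOf_not_bddAbove_birkhoffSum_nonneg (hT : MeasurePreserving T μ μ)
    (hψm : Measurable ψ) (hψ : Integrable ψ μ) :
    0 ≤ ∫ x in {x | ¬BddAbove (range fun n => birkhoffSum T ψ n x)}, ψ x ∂μ := by
  have hU := measurableSet_setOf_not_bddAbove_birkhoffSum hT.measurable hψm
  have hTU := hT.restrict_preimage hU
  rw [preimage_setOf_not_bddAbove_birkhoffSum] at hTU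
  have hpos : ∀ᵐ x ∂μ.restrict {x | ¬BddAbove (range fun n => birkhoffSum T ψ n x)},
      x ∈ {x | ∃ n, 0 < birkhoffSum T ψ n x} := by
    filter_upwards [ae_restrict_mem hU] with x hx
    obtain ⟨_, ⟨n, rfl⟩, hn⟩ := not_bddAbove_iff.1 hx 0
    exact ⟨n, hn⟩
  simpa only [Measure.restrict_eq_self_of_ae_mem hpos] using
    setIntegral_exists_birkhoffSum_pos_nonneg hTU hψm hψ.restrict

theorem ae_bddAbove_range_birkhoffSum_sub_mul [IsFiniteMeasure μ] (hT : MeasurePreserving T μ μ)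
    (hψm : Measurable ψ) (hψ : Integrable ψ μ)
    (hinv : ∀ s, MeasurableSet s → T ⁻¹' s = s → ∫ x in s, ψ x ∂μ = 0) {α : ℝ} (hα : 0 < α) :
    ∀ᵐ x ∂μ, BddAbove (range fun n => birkhoffSum T ψ n x - n * α) := by
  have hsum : ∀ n x, birkhoffSum T (fun y => ψ y - α) n x = birkhoffSum T ψ n x - n * α := by
    intro n x
    simp [birkhoffSum, Finset.sum_sub_distrib]
  set U := {x | ¬BddAbove (range fun n => birkhoffSum T (fun y => ψ y - α) n x)}
  have hU : MeasurableSet U :=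
    measurableSet_setOf_not_bddAbove_birkhoffSum hT.measurable (hψm.sub measurable_const)
  have hnonneg : 0 ≤ ∫ x in U, (ψ x - α) ∂μ :=
    setIntegral_setOf_not_bddAbove_birkhoffSum_nonneg hT (hψm.sub measurable_const)
      (hψ.sub (integrable_const α))
  rw [integral_sub hψ.integrableOn (integrableOn_const (measure_ne_top μ U)),
    hinv U hU preimage_setOf_not_bddAbove_birkhoffSum, setIntegral_const, smul_eq_mul] at hnonneg
  have hUnull : μ U = 0 := by
    rw [← measureReal_eq_zero_iff]
    nlinarith [measureReal_nonneg (μ := μ) (s := U)]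
  rw [ae_iff, ← hUnull]
  simp only [U, hsum]

theorem ae_eventually_birkhoffSum_le [IsFiniteMeasure μ] (hT : MeasurePreserving T μ μ)
    (hψm : Measurable ψ) (hψ : Integrable ψ μ)
    (hinv : ∀ s, MeasurableSet s → T ⁻¹' s = s → ∫ x in s, ψ x ∂μ = 0) :
    ∀ᵐ x ∂μ, ∀ ε > 0, ∀ᶠ n : ℕ in atTop, birkhoffSum T ψ n x ≤ ε * n := by
  filter_upwards [ae_all_iff.2 fun k : ℕ =>
    ae_bddAbove_range_birkhoffSum_sub_mul hT hψm hψ hinv (Nat.one_div_pos_of_nat (n := k))]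
    with x hx ε hε
  obtain ⟨k, hk⟩ := exists_nat_one_div_lt hε
  obtain ⟨C, hC⟩ := hx k
  have hgrow := tendsto_natCast_atTop_atTop.const_mul_atTop (sub_pos.2 hk)
  filter_upwards [hgrow.eventually_ge_atTop C] with n hn
  linarith [hC (mem_range_self n)]

theorem ae_tendsto_birkhoffAverage_zero [IsFiniteMeasure μ] (hT : MeasurePreserving T μ μ)
    (hψm : Measurable ψ) (hψ : Integrable ψ μ)
    (hinv : ∀ s, MeasurableSet s → T ⁻¹' s = s → ∫ x in s, ψ x ∂μ = 0) :
    ∀ᵐ x ∂μ, Tendsto (fun n => birkhoffAverage ℝ T ψ n x) atTop (𝓝 0) := by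
  have hinv_neg : ∀ s, MeasurableSet s → T ⁻¹' s = s → ∫ x in s, (-ψ) x ∂μ = 0 :=
    fun s hs hTs => by simp [integral_neg, hinv s hs hTs]
  filter_upwards [ae_eventually_birkhoffSum_le hT hψm hψ hinv,
    ae_eventually_birkhoffSum_le hT hψm.neg hψ.neg hinv_neg] with x hup hdown
  refine Metric.tendsto_nhds.2 fun ε hε => ?_
  filter_upwards [hup (ε / 2) (by positivity), hdown (ε / 2) (by positivity),
    eventually_gt_atTop 0] with n hle hge hn
  rw [birkhoffSum_neg] at hge
  have hn' : (0 : ℝ) < n := by exact_mod_cast hn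
  rw [Real.dist_0_eq_abs, birkhoffAverage, smul_eq_mul, abs_mul, abs_inv, abs_of_pos hn',
    inv_mul_lt_iff₀ hn', abs_lt]
  constructor <;> nlinarith

end Unbounded

section Coboundary

variable {X : Type*}

theorem birkhoffSum_comp_sub {G : Type*} [AddCommGroup G] (T : X → X) (f : X → G) (n : ℕ)
    (x : X) : birkhoffSum T (fun y => f (T y) - f y) n x = f (T^[n] x) - f x := by
  simpa [birkhoffSum, iterate_succ_apply'] using Finset.sum_range_sub (fun k => f (T^[k] x)) n

def clamp (K a : ℝ) : ℝ := max (-K) (min K a)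

theorem abs_clamp_le (K a : ℝ) : |clamp K a| ≤ |K| := by
  rw [clamp, abs_le]
  constructor <;> cases abs_cases K <;> simp only [max_def, min_def] <;> split_ifs <;> linarith

theorem abs_clamp_sub_clamp_le (K a b : ℝ) : |clamp K a - clamp K b| ≤ |a - b| := by
  rw [clamp, clamp, abs_le]
  constructor <;> cases abs_cases (a - b) <;> simp only [max_def, min_def] <;> split_ifs <;>
    linarith

theorem min_sub_le_clamp_sub_clamp (K a b : ℝ) : min (a - b) 0 ≤ clamp K a - clamp K b := by
  rw [clamp, clamp]
  simp only [max_def, min_def]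
  split_ifs <;> linarith

theorem tendsto_clamp_natCast (a : ℝ) : Tendsto (fun K : ℕ => clamp K a) atTop (𝓝 a) := by
  refine tendsto_const_nhds.congr' ?_
  filter_upwards [eventually_ge_atTop ⌈|a|⌉₊] with K hK
  have hK' : |a| ≤ K := (Nat.le_ceil _).trans (Nat.cast_le.2 hK)
  rw [clamp, min_eq_right ((le_abs_self a).trans hK'),
    max_eq_right (neg_le.1 ((neg_le_abs a).trans hK'))]

theorem measurable_clamp (K : ℝ) : Measurable (clamp K) :=
  measurable_const.max (measurable_const.min measurable_id)

variable [MeasurableSpace X] {μ : Measure X}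

theorem integrable_of_tendsto_of_integral_le {F : ℕ → X → ℝ} {φ : X → ℝ} {C : ℝ}
    (hF : ∀ K, Integrable (F K) μ) (hF₀ : ∀ K x, 0 ≤ F K x) (hC : ∀ K, ∫ x, F K x ∂μ ≤ C)
    (hlim : ∀ᵐ x ∂μ, Tendsto (fun K => F K x) atTop (𝓝 (φ x))) : Integrable φ μ := by
  refine ⟨aestronglyMeasurable_of_tendsto_ae _ (fun K => (hF K).aestronglyMeasurable) hlim, ?_⟩
  have hlintegral : ∀ K, ∫⁻ x, ‖F K x‖ₑ ∂μ ≤ ENNReal.ofReal C := fun K => by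
    rw [← ofReal_integral_norm_eq_lintegral_enorm (hF K)]
    exact ENNReal.ofReal_le_ofReal
      ((integral_congr_ae (ae_of_all _ fun x => Real.norm_of_nonneg (hF₀ K x))).trans_le (hC K))
  rw [hasFiniteIntegral_iff_enorm]
  calc ∫⁻ x, ‖φ x‖ₑ ∂μ = ∫⁻ x, liminf (fun K => ‖F K x‖ₑ) atTop ∂μ :=
        lintegral_congr_ae (by filter_upwards [hlim] with x hx using hx.enorm.liminf_eq.symm)
    _ ≤ liminf (fun K => ∫⁻ x, ‖F K x‖ₑ ∂μ) atTop :=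
        lintegral_liminf_le' fun K => (hF K).aestronglyMeasurable.enorm
    _ ≤ ENNReal.ofReal C := liminf_le_of_frequently_le' (Frequently.of_forall hlintegral)
    _ < ⊤ := ENNReal.ofReal_lt_top

variable {T : X → X} {f g : X → ℝ}

theorem integral_comp_sub_eq_zero (hT : MeasurePreserving T μ μ) {u : X → ℝ}
    (hu : Integrable u μ) : ∫ x, (u (T x) - u x) ∂μ = 0 := by
  have huT : Integrable (fun x => u (T x)) μ := hT.integrable_comp_of_integrable hu
  rw [integral_sub huT hu,
    hT.integral_comp_of_aestronglyMeasurable hu.aestronglyMeasurable, sub_self]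

theorem integrable_clamp_comp [IsFiniteMeasure μ] (hf : Measurable f) (K : ℝ) :
    Integrable (fun x => clamp K (f x)) μ :=
  (integrable_const |K|).mono' ((measurable_clamp K).comp hf).aestronglyMeasurable
    (ae_of_all _ fun x => abs_clamp_le K (f x))

/-- Fatou's lemma applied to the coboundaries of the truncations `clamp K ∘ f`, which have
integral zero and are bounded below by `-|g|`. -/
theorem integrable_comp_sub_of_le [IsFiniteMeasure μ] (hT : MeasurePreserving T μ μ)
    (hf : Measurable f) (hg : Integrable g μ) (hgf : ∀ x, g x ≤ f (T x) - f x) :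
    Integrable (fun x => f (T x) - f x) μ := by
  have hclamp : ∀ K : ℕ, Integrable (fun x => clamp K (f (T x)) - clamp K (f x)) μ :=
    fun K => (hT.integrable_comp_of_integrable (integrable_clamp_comp hf K)).sub
      (integrable_clamp_comp hf K)
  have hshift : Integrable (fun x => f (T x) - f x + |g x|) μ := by
    refine integrable_of_tendsto_of_integral_le
      (F := fun K x => clamp K (f (T x)) - clamp K (f x) + |g x|) (C := ∫ x, |g x| ∂μ)
      (fun K => (hclamp K).add hg.abs) (fun K x => ?_) (fun K => ?_) (ae_of_all _ fun x => ?_)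
    · have hmin : -|g x| ≤ min (f (T x) - f x) 0 :=
        le_min (by linarith [neg_abs_le (g x), hgf x]) (neg_nonpos.2 (abs_nonneg _))
      linarith [min_sub_le_clamp_sub_clamp K (f (T x)) (f x)]
    · rw [integral_add (hclamp K) hg.abs,
        integral_comp_sub_eq_zero hT (integrable_clamp_comp hf K), zero_add]
    · exact ((tendsto_clamp_natCast _).sub (tendsto_clamp_natCast _)).add_const _
  exact (hshift.sub hg.abs).congr (ae_of_all _ fun x => add_sub_cancel_right _ _)

theorem integral_comp_sub_eq_zero_of_le [IsFiniteMeasure μ] (hT : MeasurePreserving T μ μ)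
    (hf : Measurable f) (hg : Integrable g μ) (hgf : ∀ x, g x ≤ f (T x) - f x) :
    ∫ x, (f (T x) - f x) ∂μ = 0 := by
  have hlim : Tendsto (fun K : ℕ => ∫ x, (clamp K (f (T x)) - clamp K (f x)) ∂μ) atTop
      (𝓝 (∫ x, (f (T x) - f x) ∂μ)) :=
    tendsto_integral_of_dominated_convergence (fun x => |f (T x) - f x|)
      (fun K => ((hT.integrable_comp_of_integrable (integrable_clamp_comp hf K)).sub
        (integrable_clamp_comp hf K)).aestronglyMeasurable)
      (integrable_comp_sub_of_le hT hf hg hgf).abs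
      (fun K => ae_of_all _ fun x => abs_clamp_sub_clamp_le K (f (T x)) (f x))
      (ae_of_all _ fun x => (tendsto_clamp_natCast _).sub (tendsto_clamp_natCast _))
  simp only [integral_comp_sub_eq_zero hT (integrable_clamp_comp hf _)] at hlim
  exact tendsto_nhds_unique hlim tendsto_const_nhds

end Coboundary

section Mane

variable {X : Type*} [MeasurableSpace X] {μ : Measure X} {T : X → X} {f g : X → ℝ}

/-- The coboundary `f ∘ T - f` has integral zero on every invariant set `s`, by the above applied
to `μ.restrict s`, so its Birkhoff averages `(f ∘ T^[n] - f) / n` tend to zero. -/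
theorem ae_tendsto_comp_iterate_div_natCast [IsFiniteMeasure μ] (hT : MeasurePreserving T μ μ)
    (hf : Measurable f) (hg : Integrable g μ) (hgf : ∀ x, g x ≤ f (T x) - f x) :
    ∀ᵐ x ∂μ, Tendsto (fun n : ℕ => f (T^[n] x) / n) atTop (𝓝 0) := by
  have hinv : ∀ s, MeasurableSet s → T ⁻¹' s = s → ∫ x in s, (f (T x) - f x) ∂μ = 0 := by
    intro s hs hTs
    have hTs' := hT.restrict_preimage hs
    rw [hTs] at hTs'
    exact integral_comp_sub_eq_zero_of_le hTs' hf hg.restrict hgf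
  filter_upwards [ae_tendsto_birkhoffAverage_zero (ψ := fun x => f (T x) - f x) hT
    ((hf.comp hT.measurable).sub hf) (integrable_comp_sub_of_le hT hf hg hgf) hinv] with x hx
  have hsplit : ∀ n : ℕ, birkhoffAverage ℝ T (fun x => f (T x) - f x) n x + f x / n =
      f (T^[n] x) / n := fun n => by
    rw [birkhoffAverage, birkhoffSum_comp_sub, smul_eq_mul, ← div_eq_inv_mul, sub_div,
      sub_add_cancel]
  simpa only [add_zero] using
    (hx.add (tendsto_const_div_atTop_nhds_zero_nat (f x))).congr hsplit

end Mane

theorem stmt_4_general {X : Type*} [MeasurableSpace X]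
    (μ : Measure X) [IsProbabilityMeasure μ]
    (T Tinv : X → X)
    (hT : MeasurePreserving T μ μ) (hTinv : MeasurePreserving Tinv μ μ)
    (hright : Function.RightInverse Tinv T)
    (b : X → ℝ) (hb_meas : Measurable b)
    (c : ℝ) (hbdd : ∀ x, -c ≤ Real.log (b (T x)) - Real.log (b x)) :
    ∀ᵐ x ∂μ,
      Tendsto (fun n : ℕ => (1 / (n : ℝ)) * Real.log (b (T^[n] x))) atTop (nhds 0) ∧
      Tendsto (fun n : ℕ => (1 / (n : ℝ)) * Real.log (b (Tinv^[n] x))) atTop (nhds 0) := by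
  have hlog : Measurable fun x => Real.log (b x) := hb_meas.log
  have hbdd_inv : ∀ x, -c ≤ -Real.log (b (Tinv x)) - -Real.log (b x) := fun x => by
    linarith [hright x ▸ hbdd (Tinv x)]
  filter_upwards [ae_tendsto_comp_iterate_div_natCast hT hlog (integrable_const (-c)) hbdd,
    ae_tendsto_comp_iterate_div_natCast hTinv hlog.neg (integrable_const (-c)) hbdd_inv]
    with x hfwd hbwd
  simp only [one_div_mul_eq_div]
  exact ⟨hfwd, by simpa [neg_div] using hbwd.neg⟩

/-- Mañé-type temperedness: if log b ∘ T − log b is bounded below, then b is tempered a.e. -/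
theorem stmt_4 {X : Type*} [MeasurableSpace X]
    (μ : Measure X) [IsProbabilityMeasure μ]
    (T Tinv : X → X)
    (hT : MeasurePreserving T μ μ) (hTinv : MeasurePreserving Tinv μ μ)
    (hleft : Function.LeftInverse Tinv T) (hright : Function.RightInverse Tinv T)
    (b : X → ℝ) (hb_meas : Measurable b) (hb_pos : ∀ x, 0 < b x)
    (c : ℝ) (hbdd : ∀ x, -c ≤ Real.log (b (T x)) - Real.log (b x)) :
    ∀ᵐ x ∂μ,
      Tendsto (fun n : ℕ => (1 / (n : ℝ)) * Real.log (b (T^[n] x))) atTop (nhds 0) ∧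
      Tendsto (fun n : ℕ => (1 / (n : ℝ)) * Real.log (b (Tinv^[n] x))) atTop (nhds 0) :=
  stmt_4_general μ T Tinv hT hTinv hright b hb_meas c hbdd
end

section
/- Let (X, T, μ) be an ergodic invertible measure-preserving system on a probability space, let P = {P₁,…,P_j} be a finite measurable partition of X, and let Λ₁ ⊂ X be measurable with μ(Λ₁ ∩ P_i) > 0 for each i. Then for every ε > 0 and δ > 0 there exist an integer n₂ ≥ 1 and a measurable set Λ₂ with μ(Λ₂) > 1 − δ such that for every x ∈ Λ₂ and every n ≥ n₂ there exists k ∈ [n, n + εn] with T^k(x) ∈ Λ₁ ∩ P(x), where P(x) denotes the partition element containing x. -/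
/-!
By Kac's identity, the measure of the points of `A` that do not come back to `A` within `q`
steps is summable in `q`. Borel–Cantelli then shows that almost every orbit, after some time
`M`, returns to `A` within `m / c ≤ ε m` steps of each of its visits at times `m ≥ M`.
Ergodicity makes almost every orbit visit `A` infinitely often, and once past such a visit,
every window `[n, n + ε n]` contains the first visit after the last visit before `n`.
Applied to each `Λ₁ ∩ P i`, this gives the conclusion with a threshold `n₂` depending on the
point; a uniform `n₂` on a set of measure `> 1 - δ` comes from continuity of measure along the
increasing sets of points whose threshold is at most `N` (Egorov's argument).
-/

open MeasureTheory Filter Set Function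
open scoped ENNReal

theorem Nat.eventually_exists_mem_Icc_of_frequently {p : ℕ → Prop} {g : ℕ → ℕ} (hg : Monotone g)
    (hfreq : ∃ᶠ m in atTop, p m) (hgap : ∀ᶠ m in atTop, p m → ∃ m', m < m' ∧ m' ≤ m + g m ∧ p m') :
    ∀ᶠ n in atTop, ∃ k, n ≤ k ∧ k ≤ n + g n ∧ p k := by
  classical
  obtain ⟨M, hM⟩ := eventually_atTop.1 hgap
  obtain ⟨s, hMs, hs⟩ := frequently_atTop.1 hfreq M
  filter_upwards [eventually_ge_atTop s] with n hsn
  -- the last visit `m₀ ≤ n` is followed by a visit `k > n` within the gap `g m₀ ≤ g n`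
  set m₀ := Nat.findGreatest p n
  have hm₀n : m₀ ≤ n := Nat.findGreatest_le n
  obtain ⟨k, hm₀k, hk, hpk⟩ :=
    hM m₀ (hMs.trans (Nat.le_findGreatest hsn hs)) (Nat.findGreatest_spec hsn hs)
  have hnk : n < k := by
    by_contra! hkn
    exact (Nat.le_findGreatest hkn hpk).not_gt hm₀k
  exact ⟨k, hnk.le, hk.trans (add_le_add hm₀n (hg hm₀n)), hpk⟩

theorem ENNReal.tsum_comp_div (f : ℕ → ℝ≥0∞) (c : ℕ) [NeZero c] :
    ∑' m, f (m / c) = c * ∑' q, f q := by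
  calc ∑' m, f (m / c) = ∑' p : ℕ × Fin c, f p.1 :=
        (Nat.divModEquiv c).tsum_eq fun p => f p.1
    _ = ∑' q, ∑' _ : Fin c, f q := ENNReal.tsum_prod (f := fun q _ => f q)
    _ = c * ∑' q, f q := by simp [ENNReal.tsum_mul_left]

theorem MeasureTheory.eventually_lt_measure_setOf_forall_ge {X : Type*} [MeasurableSpace X]
    {μ : Measure X} {p : ℕ → X → Prop} (h : ∀ᵐ x ∂μ, ∀ᶠ n in atTop, p n x) {c : ℝ≥0∞}
    (hc : c < μ univ) : ∀ᶠ N in atTop, c < μ {x | ∀ n ≥ N, p n x} := by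
  have hmono : Monotone fun N => {x | ∀ n ≥ N, p n x} :=
    fun N N' hNN' x hx n hn => hx n (hNN'.trans hn)
  have hU : μ (⋃ N, {x | ∀ n ≥ N, p n x}) = μ univ :=
    measure_congr (eventuallyEq_univ.2 (h.mono fun x hx => mem_iUnion.2 (eventually_atTop.1 hx)))
  have hlim := tendsto_measure_iUnion_atTop (μ := μ) hmono
  rw [hU] at hlim
  exact hlim.eventually (lt_mem_nhds hc)

section Recurrence

variable {X : Type*} {T : X → X} {A : Set X}

def orbitAvoids (T : X → X) (A : Set X) (m : ℕ) : Set X :=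
  {x | ∀ l < m, T^[l] x ∉ A}

theorem orbitAvoids_succ (T : X → X) (A : Set X) (m : ℕ) :
    orbitAvoids T A (m + 1) = orbitAvoids T A m \ T^[m] ⁻¹' A := by
  ext x
  simp only [orbitAvoids, mem_ofPred_eq, Set.mem_sdiff, mem_preimage,
    Nat.lt_succ_iff_lt_or_eq, or_imp, forall_and, forall_eq]

theorem orbitAvoids_succ' (T : X → X) (A : Set X) (m : ℕ) :
    orbitAvoids T A (m + 1) = T ⁻¹' orbitAvoids T A m \ A := by
  ext x
  simp only [orbitAvoids, mem_ofPred_eq, Set.mem_sdiff, mem_preimage,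
    Nat.forall_lt_succ_left, iterate_zero_apply, iterate_succ_apply, and_comm]

theorem pairwise_disjoint_orbitAvoids_inter_preimage (T : X → X) (A : Set X) :
    Pairwise (Disjoint on fun m => orbitAvoids T A m ∩ T^[m] ⁻¹' A) := by
  refine (pairwise_disjoint_on _).2 fun m m' hmm' => disjoint_left.2 ?_
  rintro x ⟨-, hxA⟩ ⟨hx', -⟩
  exact hx' m hmm' hxA

variable [MeasurableSpace X] {μ : Measure X} [IsFiniteMeasure μ]

theorem measurableSet_orbitAvoids (hT : Measurable T) (hA : MeasurableSet A) (m : ℕ) :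
    MeasurableSet (orbitAvoids T A m) := by
  simp only [orbitAvoids, ofPred_forall]
  exact MeasurableSet.iInter fun l => MeasurableSet.iInter fun _ => (hT.iterate l) hA.compl

/-- Kac's identity: adding `μ (orbitAvoids T A (m + 1))` to either side gives
`μ (orbitAvoids T A m)`. -/
theorem MeasureTheory.MeasurePreserving.measure_preimage_orbitAvoids_inter
    (hT : MeasurePreserving T μ μ) (hA : MeasurableSet A) (m : ℕ) :
    μ (T ⁻¹' orbitAvoids T A m ∩ A) = μ (orbitAvoids T A m ∩ T^[m] ⁻¹' A) := by
  have hW := measurableSet_orbitAvoids hT.measurable hA m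
  refine (ENNReal.add_left_inj (measure_ne_top μ (orbitAvoids T A (m + 1)))).1 ?_
  calc μ (T ⁻¹' orbitAvoids T A m ∩ A) + μ (orbitAvoids T A (m + 1))
      = μ (T ⁻¹' orbitAvoids T A m) := by
        rw [orbitAvoids_succ', measure_inter_add_sdiff _ hA]
    _ = μ (orbitAvoids T A m) := hT.measure_preimage hW.nullMeasurableSet
    _ = μ (orbitAvoids T A m ∩ T^[m] ⁻¹' A) + μ (orbitAvoids T A (m + 1)) := by
        rw [orbitAvoids_succ, measure_inter_add_sdiff _ ((hT.measurable.iterate m) hA)]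

theorem MeasureTheory.MeasurePreserving.tsum_measure_preimage_orbitAvoids_inter_le
    (hT : MeasurePreserving T μ μ) (hA : MeasurableSet A) :
    ∑' m, μ (T ⁻¹' orbitAvoids T A m ∩ A) ≤ μ univ := by
  simp_rw [hT.measure_preimage_orbitAvoids_inter hA]
  rw [← measure_iUnion (pairwise_disjoint_orbitAvoids_inter_preimage T A) fun m =>
    (measurableSet_orbitAvoids hT.measurable hA m).inter ((hT.measurable.iterate m) hA)]
  exact measure_mono (subset_univ _)

theorem MeasureTheory.MeasurePreserving.ae_eventually_exists_return_le
    (hT : MeasurePreserving T μ μ) (hA : MeasurableSet A) (c : ℕ) [NeZero c] :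
    ∀ᵐ x ∂μ, ∀ᶠ m in atTop, T^[m] x ∈ A → ∃ m', m < m' ∧ m' ≤ m + m / c ∧ T^[m'] x ∈ A := by
  set E : ℕ → Set X := fun m => T^[m] ⁻¹' (T ⁻¹' orbitAvoids T A (m / c) ∩ A)
  have hE : ∀ m, μ (E m) = μ (T ⁻¹' orbitAvoids T A (m / c) ∩ A) := fun m =>
    (hT.iterate m).measure_preimage
      ((hT.measurable (measurableSet_orbitAvoids hT.measurable hA _)).inter hA).nullMeasurableSet
  have hsum : ∑' m, μ (E m) ≠ ∞ := by
    simp_rw [hE]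
    rw [ENNReal.tsum_comp_div (fun q => μ (T ⁻¹' orbitAvoids T A q ∩ A))]
    exact ENNReal.mul_ne_top (ENNReal.natCast_ne_top c)
      (ne_top_of_le_ne_top (measure_ne_top μ univ)
        (hT.tsum_measure_preimage_orbitAvoids_inter_le hA))
  filter_upwards [ae_eventually_notMem hsum] with x hx
  filter_upwards [hx] with m hm hmA
  simp only [E, orbitAvoids, mem_preimage, mem_inter_iff, mem_ofPred_eq, not_and', not_forall,
    not_not, exists_prop] at hm
  obtain ⟨l, hl, hlA⟩ := hm hmA
  refine ⟨l + 1 + m, by omega, by omega, ?_⟩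
  rwa [iterate_add_apply, iterate_succ_apply]

theorem Ergodic.ae_frequently_iterate_mem (hT : Ergodic T μ) (hA : MeasurableSet A)
    (h0 : μ A ≠ 0) : ∀ᵐ x ∂μ, ∃ᶠ n in atTop, T^[n] x ∈ A := by
  set U := ⋃ n, T^[n] ⁻¹' A
  have hU : MeasurableSet U := MeasurableSet.iUnion fun n => (hT.measurable.iterate n) hA
  have hTU : T ⁻¹' U ⊆ U := by
    simp only [U, preimage_iUnion, ← preimage_comp, ← iterate_succ]
    exact iUnion_subset fun n => subset_iUnion (fun n => T^[n] ⁻¹' A) (n + 1)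
  have hUae : ∀ᵐ x ∂μ, x ∈ U := by
    rcases hT.ae_empty_or_univ_of_preimage_ae_le hU.nullMeasurableSet hTU.eventuallyLE with
      hempty | huniv
    · exact absurd (measure_mono_null (subset_iUnion (fun n => T^[n] ⁻¹' A) 0)
        ((measure_congr hempty).trans measure_empty)) h0
    · exact eventuallyEq_univ.1 huniv
  have hrec := hT.toMeasurePreserving.conservative.ae_forall_image_mem_imp_frequently_image_mem
    hA.nullMeasurableSet
  filter_upwards [hUae, hrec] with x hxU hx
  obtain ⟨k, hk⟩ := mem_iUnion.1 hxU
  exact hx k hk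

theorem Ergodic.ae_eventually_exists_iterate_mem_Icc (hT : Ergodic T μ) (hA : MeasurableSet A)
    (h0 : μ A ≠ 0) (c : ℕ) [NeZero c] :
    ∀ᵐ x ∂μ, ∀ᶠ n in atTop, ∃ k, n ≤ k ∧ k ≤ n + n / c ∧ T^[k] x ∈ A := by
  filter_upwards [hT.ae_frequently_iterate_mem hA h0,
    hT.toMeasurePreserving.ae_eventually_exists_return_le hA c] with x hfreq hgap
  exact Nat.eventually_exists_mem_Icc_of_frequently (fun _ _ h => Nat.div_le_div_right h)
    hfreq hgap

theorem Ergodic.ae_eventually_exists_iterate_mem_window (hT : Ergodic T μ)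
    (hA : MeasurableSet A) (h0 : μ A ≠ 0) {ε : ℝ} (hε : 0 < ε) :
    ∀ᵐ x ∂μ, ∀ᶠ n : ℕ in atTop, ∃ k : ℕ, n ≤ k ∧ (k : ℝ) ≤ n + ε * n ∧ T^[k] x ∈ A := by
  set c := ⌈ε⁻¹⌉₊
  have : NeZero c := ⟨(Nat.ceil_pos.2 (inv_pos.2 hε)).ne'⟩
  filter_upwards [hT.ae_eventually_exists_iterate_mem_Icc hA h0 c] with x hx
  filter_upwards [hx] with n ⟨k, hnk, hk, hkA⟩
  refine ⟨k, hnk, ?_, hkA⟩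
  have hdiv : ((n / c : ℕ) : ℝ) ≤ ε * n := calc
    ((n / c : ℕ) : ℝ) ≤ n / c := Nat.cast_div_le
    _ ≤ n / ε⁻¹ := div_le_div_of_nonneg_left (Nat.cast_nonneg n) (inv_pos.2 hε) (Nat.le_ceil _)
    _ = ε * n := by rw [div_inv_eq_mul, mul_comm]
  calc (k : ℝ) ≤ ((n + n / c : ℕ) : ℝ) := by exact_mod_cast hk
    _ = n + ((n / c : ℕ) : ℝ) := Nat.cast_add _ _
    _ ≤ n + ε * n := by linarith

end Recurrence

open MeasureTheory Real ENNReal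

theorem stmt_12_general {X : Type*} [MeasurableSpace X]
    (μ : Measure X) [IsProbabilityMeasure μ]
    (T : X → X) (herg : Ergodic T μ)
    (j : ℕ) (P : Fin j → Set X)
    (hPmeas : ∀ i, MeasurableSet (P i))
    (hPcover : (⋃ i, P i) = Set.univ)
    (Λ₁ : Set X) (hΛ₁meas : MeasurableSet Λ₁)
    (hΛ₁pos : ∀ i, 0 < μ (Λ₁ ∩ P i))
    (ε δ : ℝ) (hε : 0 < ε) (hδ : 0 < δ) :
    ∃ n₂ : ℕ, 1 ≤ n₂ ∧ ∃ Λ₂ : Set X, MeasurableSet Λ₂ ∧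
      1 - ENNReal.ofReal δ < μ Λ₂ ∧
      ∀ x ∈ Λ₂, ∀ n : ℕ, n₂ ≤ n → ∃ k : ℕ,
        n ≤ k ∧ (k : ℝ) ≤ n + ε * n ∧
        T^[k] x ∈ Λ₁ ∧ ∃ i, x ∈ P i ∧ T^[k] x ∈ P i := by
  set p : ℕ → X → Prop := fun n x => ∃ k : ℕ, n ≤ k ∧ (k : ℝ) ≤ n + ε * n ∧
    T^[k] x ∈ Λ₁ ∧ ∃ i, x ∈ P i ∧ T^[k] x ∈ P i
  have hp : ∀ᵐ x ∂μ, ∀ᶠ n in atTop, p n x := by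
    have hwindow := fun i => herg.ae_eventually_exists_iterate_mem_window
      (hΛ₁meas.inter (hPmeas i)) (hΛ₁pos i).ne' hε
    filter_upwards [ae_all_iff.2 hwindow] with x hx
    obtain ⟨i, hxi⟩ := mem_iUnion.1 (hPcover ▸ mem_univ x)
    filter_upwards [hx i] with n ⟨k, hnk, hk, hkΛ, hkP⟩
    exact ⟨k, hnk, hk, hkΛ, i, hxi, hkP⟩
  have hlt : 1 - ENNReal.ofReal δ < μ univ := by
    rw [measure_univ]
    exact ENNReal.sub_lt_self one_ne_top one_ne_zero (ENNReal.ofReal_pos.2 hδ).ne'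
  obtain ⟨n₂, hn₂, hμ⟩ :=
    ((eventually_ge_atTop 1).and (eventually_lt_measure_setOf_forall_ge hp hlt)).exists
  refine ⟨n₂, hn₂, {x | ∀ n ≥ n₂, p n x}, ?_, hμ, fun x hx n hn => hx n hn⟩
  have hT := herg.measurable
  refine measurableSet_setOfPred.2 (Measurable.forall fun n => Measurable.forall fun _ =>
    Measurable.exists fun k => measurable_const.and (measurable_const.and ?_))
  exact (measurableSet_setOfPred.1 ((hT.iterate k) hΛ₁meas)).and <| Measurable.exists fun i =>
    (measurableSet_setOfPred.1 (hPmeas i)).and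
      (measurableSet_setOfPred.1 ((hT.iterate k) (hPmeas i)))

/-- Uniform recurrence: points return at a time `k ∈ [n, n+εn]` both to their own partition
    element and to a fixed positive-measure set `Λ₁`. -/
theorem stmt_12 {X : Type*} [MeasurableSpace X]
    (μ : Measure X) [IsProbabilityMeasure μ]
    (T Tinv : X → X) (herg : Ergodic T μ)
    (hTinv : MeasurePreserving Tinv μ μ)
    (hleft : Function.LeftInverse Tinv T) (hright : Function.RightInverse Tinv T)
    (j : ℕ) (hj : 0 < j) (P : Fin j → Set X)
    (hPmeas : ∀ i, MeasurableSet (P i))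
    (hPdisj : Pairwise (Function.onFun Disjoint P))
    (hPcover : (⋃ i, P i) = Set.univ)
    (Λ₁ : Set X) (hΛ₁meas : MeasurableSet Λ₁)
    (hΛ₁pos : ∀ i, 0 < μ (Λ₁ ∩ P i))
    (ε δ : ℝ) (hε : 0 < ε) (hδ : 0 < δ) :
    ∃ n₂ : ℕ, 1 ≤ n₂ ∧ ∃ Λ₂ : Set X, MeasurableSet Λ₂ ∧
      1 - ENNReal.ofReal δ < μ Λ₂ ∧
      ∀ x ∈ Λ₂, ∀ n : ℕ, n₂ ≤ n → ∃ k : ℕ,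
        n ≤ k ∧ (k : ℝ) ≤ n + ε * n ∧
        T^[k] x ∈ Λ₁ ∧ ∃ i, x ∈ P i ∧ T^[k] x ∈ P i :=
  stmt_12_general μ T herg j P hPmeas hPcover Λ₁ hΛ₁meas hΛ₁pos ε δ hε hδ
end
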